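/- Consider a hyperplane arrangement in ℝⁿ and let S = [u, w] be the closed segment between two points u, w ∈ ℝⁿ. Let P and Q be sign patterns such that R_P ∩ S and R_Q ∩ S are nonempty. Then there exist k ≥ 0 and sign patterns P = P⁰, P¹, …, P^k = Q such that consecutive patterns Pᶦ and Pᶦ⁺¹ differ at exactly one index, and R_{Pᶦ} ∩ S is nonempty for every i ≤ k. -/

import Mathlib

open scoped RealInnerProductSpace

/-- The closed region of a hyperplane arrangement (normals `a`, offsets `b`)
corresponding to the sign pattern `P` (`true` encodes `+1`, `false` encodes `−1`). -/
def hypRegion {n : ℕ} {ι : Type*} (a : ι → EuclideanSpace ℝ (Fin n)) (b : ι → ℝ)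
    (P : ι → Bool) : Set (EuclideanSpace ℝ (Fin n)) :=
  {x | ∀ i, if P i then b i ≤ ⟪a i, x⟫ else ⟪a i, x⟫ ≤ b i}

open AffineMap Function Relation Set

/-! Walk from a point `x ∈ R_P` of the segment towards a point `y ∈ R_Q`. Along `[x, y]` every
hyperplane on which `P` and `Q` disagree is crossed, while the constraints on which they agree
hold throughout, by convexity. At the first of these crossings the point is still in `R_P` and lies
on the crossed hyperplane, so flipping `P` there gives an adjacent pattern whose region meets the
segment and which is one step closer to `Q` in Hamming distance; induct on that distance. -/

def OnSide (s : Bool) (c r : ℝ) : Prop :=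
  if s then c ≤ r else r ≤ c

namespace OnSide

variable {s : Bool} {c r₀ r₁ : ℝ}

lemma self (s : Bool) (c : ℝ) : OnSide s c c := by
  cases s <;> simp [OnSide]

lemma lineMap (h₀ : OnSide s c r₀) (h₁ : OnSide s c r₁) {t : ℝ} (ht : t ∈ Icc (0 : ℝ) 1) :
    OnSide s c (AffineMap.lineMap r₀ r₁ t) := by
  cases s
  · simpa [OnSide] using lineMap_mono_endpoints (r := t) h₀ h₁ ht.1 ht.2
  · simpa [OnSide] using lineMap_mono_endpoints (r := t) h₀ h₁ ht.1 ht.2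

lemma exists_lineMap_eq (h₀ : OnSide s c r₀) (h₁ : OnSide (!s) c r₁) :
    ∃ τ ∈ Icc (0 : ℝ) 1, AffineMap.lineMap r₀ r₁ τ = c := by
  have hcont : ContinuousOn (AffineMap.lineMap r₀ r₁ : ℝ → ℝ) (Icc 0 1) :=
    lineMap_continuous.continuousOn
  cases s
  · exact intermediate_value_Icc zero_le_one hcont (by simpa [OnSide] using And.intro h₀ h₁)
  · exact intermediate_value_Icc' zero_le_one hcont (by simpa [OnSide] using And.intro h₁ h₀)

lemma lineMap_of_le (h₀ : OnSide s c r₀) (h₁ : OnSide (!s) c r₁) {τ t : ℝ}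
    (hτ : AffineMap.lineMap r₀ r₁ τ = c) (ht : t ≤ τ) :
    OnSide s c (AffineMap.lineMap r₀ r₁ t) := by
  cases s
  · simp only [OnSide, Bool.not_false, if_true, if_false, Bool.false_eq_true] at *
    exact hτ ▸ lineMap_mono (h₀.trans h₁) ht
  · simp only [OnSide, Bool.not_true, if_true, if_false, Bool.false_eq_true] at *
    exact hτ ▸ lineMap_anti (h₁.trans h₀) ht

end OnSide

lemma inner_lineMap {E : Type*} [NormedAddCommGroup E] [InnerProductSpace ℝ E] (v x y : E) (t : ℝ) :
    ⟪v, lineMap x y t⟫ = lineMap ⟪v, x⟫ ⟪v, y⟫ t := by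
  simp only [lineMap_apply_module, inner_add_right, real_inner_smul_right, smul_eq_mul]

lemma hammingDist_update_lt {ι : Type*} [Fintype ι] [DecidableEq ι] {β : ι → Type*}
    [∀ i, DecidableEq (β i)] {x y : ∀ i, β i} {j : ι} (h : x j ≠ y j) :
    hammingDist (update x j (y j)) y < hammingDist x y := by
  refine Finset.card_lt_card (Finset.ssubset_iff_of_subset ?_ |>.2 ⟨j, by simpa, by simp⟩)
  intro i
  rcases eq_or_ne i j with rfl | hij <;> simp_all [update_of_ne]

section Arrangement

variable {n : ℕ} {ι : Type*} {a : ι → EuclideanSpace ℝ (Fin n)} {b : ι → ℝ}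

lemma mem_hypRegion_iff {P : ι → Bool} {x : EuclideanSpace ℝ (Fin n)} :
    x ∈ hypRegion a b P ↔ ∀ i, OnSide (P i) (b i) ⟪a i, x⟫ :=
  Iff.rfl

lemma exists_mem_segment_mem_hypRegion_update [Fintype ι] [DecidableEq ι] {P Q : ι → Bool}
    {x y : EuclideanSpace ℝ (Fin n)} (hx : x ∈ hypRegion a b P) (hy : y ∈ hypRegion a b Q)
    (hPQ : P ≠ Q) :
    ∃ j, P j ≠ Q j ∧ ∃ z ∈ segment ℝ x y, z ∈ hypRegion a b (update P j (Q j)) := by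
  rw [mem_hypRegion_iff] at hx hy
  have hQ : ∀ i, P i ≠ Q i → Q i = !P i := fun i h => Bool.eq_not_iff.2 h.symm
  have hcross : ∀ i, P i ≠ Q i → ∃ τ ∈ Icc (0 : ℝ) 1, lineMap ⟪a i, x⟫ ⟪a i, y⟫ τ = b i :=
    fun i hi => (hx i).exists_lineMap_eq (hQ i hi ▸ hy i)
  choose! τ hτ01 hτ using hcross
  obtain ⟨j, hj, hjmin⟩ := (Finset.univ.filter fun i => P i ≠ Q i).exists_min_image τ
    (by simpa [Finset.filter_nonempty_iff] using ne_iff.1 hPQ)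
  rw [Finset.mem_filter] at hj
  have hzP : lineMap x y (τ j) ∈ hypRegion a b P := by
    intro i
    rw [inner_lineMap]
    by_cases hi : P i = Q i
    · exact (hx i).lineMap (hi ▸ hy i) (hτ01 j hj.2)
    · exact (hx i).lineMap_of_le (hQ i hi ▸ hy i) (hτ i hi) (hjmin i (by simpa using hi))
  refine ⟨j, hj.2, _, lineMap_mem_segment ℝ x y (hτ01 j hj.2), fun i => ?_⟩
  rcases eq_or_ne i j with rfl | hij
  · rw [update_self, inner_lineMap, hτ i hj.2]
    exact OnSide.self _ _
  · rw [update_of_ne hij]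
    exact hzP i

def SegmentAdj (a : ι → EuclideanSpace ℝ (Fin n)) (b : ι → ℝ) (u w : EuclideanSpace ℝ (Fin n))
    (P Q : ι → Bool) : Prop :=
  (∃ j, P j ≠ Q j ∧ ∀ i, i ≠ j → P i = Q i) ∧ (hypRegion a b Q ∩ segment ℝ u w).Nonempty

lemma reflTransGen_segmentAdj [Fintype ι] {u w x y : EuclideanSpace ℝ (Fin n)}
    {P Q : ι → Bool} (hx : x ∈ hypRegion a b P) (hxs : x ∈ segment ℝ u w)
    (hy : y ∈ hypRegion a b Q) (hys : y ∈ segment ℝ u w) :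
    ReflTransGen (SegmentAdj a b u w) P Q := by
  classical
  induction hd : hammingDist P Q using Nat.strong_induction_on generalizing P x with
  | _ d ih =>
  by_cases hPQ : P = Q
  · exact hPQ ▸ .refl
  obtain ⟨j, hj, z, hz, hzP'⟩ := exists_mem_segment_mem_hypRegion_update hx hy hPQ
  have hzs : z ∈ segment ℝ u w := (convex_segment u w).segment_subset hxs hys hz
  have hadj : SegmentAdj a b u w P (update P j (Q j)) :=
    ⟨⟨j, by simpa using hj, fun i hi => (update_of_ne hi _ _).symm⟩, z, hzP', hzs⟩
  exact .head hadj (ih _ (hd ▸ hammingDist_update_lt hj) hzP' hzs rfl)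

end Arrangement

lemma Relation.ReflTransGen.exists_fin_chain {α : Type*} {r : α → α → Prop} {x y : α}
    (h : ReflTransGen r x y) :
    ∃ (k : ℕ) (B : Fin (k + 1) → α), B 0 = x ∧ B (Fin.last k) = y ∧
      ∀ i : Fin k, r (B i.castSucc) (B i.succ) := by
  induction h with
  | refl => exact ⟨0, fun _ => x, rfl, rfl, fun i => i.elim0⟩
  | @tail y z _ hyz ih =>
    obtain ⟨k, B, hB0, hBk, hB⟩ := ih
    refine ⟨k + 1, Fin.snoc B z, by simpa using hB0, by simp, fun i => ?_⟩
    induction i using Fin.lastCases with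
    | last => simpa [hBk] using hyz
    | cast i =>
      rw [← Fin.castSucc_succ, Fin.snoc_castSucc, Fin.snoc_castSucc]
      exact hB i

/-- Any two regions of a hyperplane arrangement that meet a fixed closed segment
`[u, w]` are connected in the neighborhood graph through regions that all meet the
segment. -/
theorem regions_touching_segment_connected {n : ℕ} {ι : Type*} [Fintype ι]
    (a : ι → EuclideanSpace ℝ (Fin n)) (b : ι → ℝ)
    (u w : EuclideanSpace ℝ (Fin n))
    (P Q : ι → Bool)
    (hP : (hypRegion a b P ∩ segment ℝ u w).Nonempty)
    (hQ : (hypRegion a b Q ∩ segment ℝ u w).Nonempty) :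
    ∃ (k : ℕ) (B : Fin (k + 1) → ι → Bool),
      B 0 = P ∧ B (Fin.last k) = Q ∧
      (∀ i : Fin k, ∃ j : ι, B i.castSucc j ≠ B i.succ j ∧
        ∀ i' : ι, i' ≠ j → B i.castSucc i' = B i.succ i') ∧
      (∀ i : Fin (k + 1), (hypRegion a b (B i) ∩ segment ℝ u w).Nonempty) := by
  obtain ⟨x, hxP, hxs⟩ := hP
  obtain ⟨y, hyQ, hys⟩ := hQ
  obtain ⟨k, B, hB0, hBk, hstep⟩ := (reflTransGen_segmentAdj hxP hxs hyQ hys).exists_fin_chain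
  refine ⟨k, B, hB0, hBk, fun i => (hstep i).1, fun i => ?_⟩
  induction i using Fin.cases with
  | zero => exact hB0 ▸ ⟨x, hxP, hxs⟩
  | succ i => exact (hstep i).2
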